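/- arXiv:2107.13123 — 5 statements merged into one kernel-verified Lean document; each statement's English description precedes it below -/
import Mathlib

section
/- Let W be a square-free word, and suppose (a, ℓ, b, c) and (a', ℓ', b', c') are square-completing quadruples in W with the same sign. Then at least one of the following holds: (1) one of the quantities |a − a'|, |b − b'|, |ℓ − ℓ'| is at least L/5 − 2, where L = max(ℓ, ℓ'); or (2) b = b' and c = c'. -/
/-- A word is square-free if it contains no factor of the form `X ++ X` with `X` nonempty. -/
def SquareFree {α : Type*} (W : List α) : Prop :=
  ∀ X : List α, X ≠ [] → ¬ (X ++ X) <:+: W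

/-- `W'` is an extension of `W` if it is obtained by inserting a single letter into `W`. -/
def IsExtension {α : Type*} (W W' : List α) : Prop :=
  ∃ (W₁ W₂ : List α) (x : α), W = W₁ ++ W₂ ∧ W' = W₁ ++ [x] ++ W₂

/-- A square-free word is extremal square-free if none of its extensions is square-free. -/
def ExtremalSquareFree {α : Type*} (W : List α) : Prop :=
  SquareFree W ∧ ∀ W', IsExtension W W' → ¬ SquareFree W'
/-- The factor `W[a, b)` of `W`, consisting of the letters `a, a+1, …, b-1`
(letters are numbered from 1). -/
def factor {α : Type*} (W : List α) (a b : ℕ) : List α :=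
  (W.drop (a - 1)).take (b - a)

/-- The quadruple `(a, ℓ, b, c)` is square-completing in `W` if, in the word `W +_b c`
obtained by inserting the letter `c` at gap `b` of `W`, the factors `[a, a+ℓ)` and
`[a+ℓ, a+2ℓ)` are equal (so they form a square of length `2ℓ`). -/
def SquareCompleting {α : Type*} (W : List α) (a ℓ b : ℕ) (c : α) : Prop :=
  1 ≤ a ∧ 1 ≤ ℓ ∧ a ≤ b + 1 ∧ b ≤ W.length ∧ a + 2 * ℓ ≤ W.length + 2 ∧
    factor (W.insertIdx b c) a (a + ℓ) = factor (W.insertIdx b c) (a + ℓ) (a + 2 * ℓ)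

/-- The sign of a square-completing quadruple: `1` if `b ≤ a + ℓ - 2`
(the inserted letter lies in the first half of the square), and `-1` if `b ≥ a + ℓ - 1`. -/
def scSign (a ℓ b : ℕ) : ℤ :=
  if b + 2 ≤ a + ℓ then 1 else -1

/-!
Read the square of `W +_b c` back in `W`, numbering letters from `0` and writing `a = A + 1`,
`ℓ = p + 1`. If the inserted letter falls in the first half of the square, `W` has period `p`
on `[A, b)` and period `p + 1` on `[b, A + p)`; if it falls in the second half, the two periods
trade places around a hole. In a square-free word a period `s` cannot hold on `s` consecutive
positions, hence two periods `s > t` cannot both hold on `s - t` consecutive positions, since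
`s - t` would be a period there.

For two quadruples of the same sign with different lengths, the two structures overlap on a long
interval, which the gaps cut into a few pieces. Each piece either lies between the two gaps or
carries two distinct periods and is then shorter than their difference; when all parameters
differ by less than `L/5 - 2`, the pieces are too short to cover the overlap. For equal lengths and
distinct gaps, some letter is forced to equal its neighbour, or a period `p + 1` spans `p + 1`
positions.
-/

section

variable {α : Type*}

def HasPeriodOn (W : List α) (s i j : ℕ) : Prop :=
  ∀ m, i ≤ m → m < j → W[m]? = W[m + s]?

namespace HasPeriodOn

variable {W : List α} {s t i j i' j' k : ℕ}

theorem mono (h : HasPeriodOn W s i j) (hi : i ≤ i') (hj : j' ≤ j) : HasPeriodOn W s i' j' :=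
  fun m hm hmj => h m (hi.trans hm) (hmj.trans_le hj)

theorem union (h : HasPeriodOn W s i j) (h' : HasPeriodOn W s i' k) (hi' : i' ≤ j) :
    HasPeriodOn W s i k := by
  intro m hm hmk
  rcases lt_or_ge m j with hmj | hmj
  · exact h m hm hmj
  · exact h' m (hi'.trans hmj) hmk

theorem sub (h : HasPeriodOn W s i j) (h' : HasPeriodOn W t i j) (hts : t ≤ s) :
    HasPeriodOn W (s - t) (i + t) (j + t) := by
  intro m hm hmj
  obtain ⟨m, rfl⟩ : ∃ m', m = m' + t := ⟨m - t, by omega⟩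
  rw [← h' m (by omega) (by omega), h m (by omega) (by omega),
    show m + t + (s - t) = m + s by omega]

end HasPeriodOn

namespace SquareFree

variable {W : List α} {s t i j i' j' : ℕ}

theorem lt_of_hasPeriodOn (hW : SquareFree W) (h : HasPeriodOn W s i j) (hs : 0 < s)
    (hn : j + s ≤ W.length) : j < i + s := by
  by_contra! hij
  set X := (W.drop i).take s
  have hshift : (W.drop (i + s)).take s = X := List.ext_getElem? fun k => by
    simp only [X, List.getElem?_take, List.getElem?_drop]
    split_ifs with hk
    · rw [h (i + k) (by omega) (by omega), Nat.add_right_comm]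
    · rfl
  refine hW X ?_ ?_
  · simp only [X, ne_eq, List.take_eq_nil_iff, List.drop_eq_nil_iff]
    omega
  · rw [show X ++ X = (W.drop i).take (s + s) by rw [List.take_add, List.drop_drop, hshift]]
    exact (List.take_prefix _ _).isInfix.trans (List.drop_suffix _ _).isInfix

theorem min_lt_max_add_sub (hW : SquareFree W) (h : HasPeriodOn W s i j)
    (h' : HasPeriodOn W t i' j') (hts : t < s) (hn : min j j' + s ≤ W.length) :
    min j j' < max i i' + (s - t) := by
  have := hW.lt_of_hasPeriodOn ((h.mono (le_max_left i i') (min_le_left j j')).sub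
    (h'.mono (le_max_right i i') (min_le_right j j')) hts.le) (by omega) (by omega)
  omega

end SquareFree

namespace HasPeriodOn

variable {W : List α} {b s i j : ℕ} {x : α}

theorem of_insertIdx_left (h : HasPeriodOn (W.insertIdx b x) s i j) (hj : j + s ≤ b) :
    HasPeriodOn W s i j := by
  intro m hm hmj
  have := h m hm hmj
  rwa [List.getElem?_insertIdx_of_lt (by omega), List.getElem?_insertIdx_of_lt (by omega)]
    at this

theorem of_insertIdx_right (h : HasPeriodOn (W.insertIdx b x) s (i + 1) (j + 1)) (hi : b ≤ i) :
    HasPeriodOn W s i j := by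
  intro m hm hmj
  have := h (m + 1) (by omega) (by omega)
  rwa [List.getElem?_insertIdx_of_gt (by omega), List.getElem?_insertIdx_of_gt (by omega),
    Nat.add_sub_cancel, show m + 1 + s - 1 = m + s by omega] at this

theorem of_insertIdx_across (h : HasPeriodOn (W.insertIdx b x) (s + 1) i j) (hj : j ≤ b)
    (hb : b ≤ i + s) : HasPeriodOn W s i j := by
  intro m hm hmj
  have := h m hm hmj
  rwa [List.getElem?_insertIdx_of_lt (by omega), List.getElem?_insertIdx_of_gt (by omega),
    show m + (s + 1) - 1 = m + s by omega] at this

end HasPeriodOn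

/-- With letters numbered from `0`, `W` has a factor `W[A, A + 2p + 1)` which becomes a square
with halves of length `p + 1` when the letter `W[K + p]` is inserted at gap `K` of the first
half. -/
structure NearSquareLeft (W : List α) (A p K : ℕ) : Prop where
  le_gap : A ≤ K
  gap_le : K ≤ A + p
  length_le : A + 2 * p + 1 ≤ W.length
  left : HasPeriodOn W p A K
  right : HasPeriodOn W (p + 1) K (A + p)

/-- With letters numbered from `0`, `W` has a factor `W[A, A + 2p + 1)` which becomes a square
with halves of length `p + 1` when the letter `W[H]` is inserted at gap `H + p + 1` of the
second half. -/
structure NearSquareRight (W : List α) (A p H : ℕ) : Prop where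
  le_hole : A ≤ H
  hole_le : H ≤ A + p
  length_le : A + 2 * p + 1 ≤ W.length
  left : HasPeriodOn W (p + 1) A H
  right : HasPeriodOn W p (H + 1) (A + p + 1)

namespace SquareCompleting

variable {W : List α} {A p b : ℕ} {c : α}

theorem hasPeriodOn {ℓ : ℕ} (h : SquareCompleting W (A + 1) ℓ b c) :
    HasPeriodOn (W.insertIdx b c) ℓ A (A + ℓ) := by
  intro m hm hmℓ
  have := congrArg (·[m - A]?) h.2.2.2.2.2
  simp only [factor, List.getElem?_take, List.getElem?_drop] at this
  rw [if_pos (by omega), if_pos (by omega)] at this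
  convert this using 2 <;> omega

theorem nearSquareLeft (h : SquareCompleting W (A + 1) (p + 1) b c) (hb : b ≤ A + p) :
    NearSquareLeft W A p b ∧ W[b + p]? = some c := by
  have hP := h.hasPeriodOn
  obtain ⟨-, -, hAb, hbn, hn, -⟩ := h
  refine ⟨⟨by omega, hb, by omega, (hP.mono le_rfl (by omega)).of_insertIdx_across le_rfl hb,
    (hP.mono (by omega) (by omega)).of_insertIdx_right le_rfl⟩, ?_⟩
  have := hP b (by omega) (by omega)
  rwa [List.getElem?_insertIdx_self, if_pos hbn, List.getElem?_insertIdx_of_gt (by omega),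
    show b + (p + 1) - 1 = b + p by omega, eq_comm] at this

theorem nearSquareRight (hW : SquareFree W) (h : SquareCompleting W (A + 1) (p + 1) b c)
    (hb : A + p < b) : ∃ H, b = H + p + 1 ∧ NearSquareRight W A p H ∧ W[H]? = some c := by
  have hP := h.hasPeriodOn
  obtain ⟨-, -, -, hbn, hn, -⟩ := h
  have hb' : b ≤ A + 2 * p + 1 := by
    by_contra! hb'
    have := hW.lt_of_hasPeriodOn (hP.of_insertIdx_left (by omega)) (by omega) (by omega)
    omega
  refine ⟨b - p - 1, by omega, ⟨by omega, by omega, by omega,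
    (hP.mono le_rfl (by omega)).of_insertIdx_left (by omega),
    (hP.mono (by omega) le_rfl).of_insertIdx_across (by omega) (by omega)⟩, ?_⟩
  have := hP (b - p - 1) (by omega) (by omega)
  rwa [List.getElem?_insertIdx_of_lt (by omega), show b - p - 1 + (p + 1) = b by omega,
    List.getElem?_insertIdx_self, if_pos hbn] at this

end SquareCompleting

namespace NearSquareLeft

variable {W : List α} {A p K A' q K' : ℕ}

theorem gap_lt (hW : SquareFree W) (P : NearSquareLeft W A p K) (hp : 0 < p) : K < A + p :=
  hW.lt_of_hasPeriodOn P.left hp (by have := P.gap_le; have := P.length_le; omega)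

theorem gap_le_of_same_length (hW : SquareFree W) (P : NearSquareLeft W A p K)
    (P' : NearSquareLeft W A' p K') (hA : A' < A + p) (hp : 0 < p) : K' ≤ K := by
  by_contra! hKK
  have hK := P.gap_lt hW hp
  have := P.length_le
  have := P'.length_le
  have hcross := hW.min_lt_max_add_sub P.right P'.left (Nat.lt_succ_self p) (by omega)
  have hKA' : K' = A' := by have := P'.le_gap; omega
  subst hKA'
  have := hW.lt_of_hasPeriodOn (P.right.union P'.right hA.le) (by omega) (by omega)
  omega

theorem eq_of_close (hW : SquareFree W) (P : NearSquareLeft W A p K)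
    (P' : NearSquareLeft W A' q K')
    (hA : 5 * A.dist A' + 10 ≤ max p q) (hK : 5 * K.dist K' + 10 ≤ max p q)
    (hp : 5 * p.dist q + 10 ≤ max p q) : p = q ∧ K = K' := by
  wlog hqp : q ≤ p generalizing A p K A' q K'
  · obtain ⟨h₁, h₂⟩ := this P' P (by rwa [Nat.dist_comm, max_comm])
      (by rwa [Nat.dist_comm, max_comm]) (by rwa [Nat.dist_comm, max_comm]) (by omega)
    exact ⟨h₁.symm, h₂.symm⟩
  unfold Nat.dist at hA hK hp
  have := P.length_le
  have := P'.length_le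
  rcases hqp.lt_or_eq with hlt | rfl
  · have := P.gap_lt hW (by omega)
    have := P'.gap_lt hW (by omega)
    have h₁ := hW.min_lt_max_add_sub P.left P'.left hlt (by omega)
    have h₂ := hW.min_lt_max_add_sub P.right P'.right (by omega) (by omega)
    omega
  · exact ⟨rfl, le_antisymm (P'.gap_le_of_same_length hW P (by omega) (by omega))
      (P.gap_le_of_same_length hW P' (by omega) (by omega))⟩

end NearSquareLeft

namespace NearSquareRight

variable {W : List α} {A p H A' q H' : ℕ}

theorem lt_hole (hW : SquareFree W) (P : NearSquareRight W A p H) (hp : 0 < p) : A < H := by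
  have := hW.lt_of_hasPeriodOn P.right hp (by have := P.length_le; omega)
  omega

theorem hole_le_of_same_length (hW : SquareFree W) (P : NearSquareRight W A p H)
    (P' : NearSquareRight W A' p H') (hA : A' < A + p) (hp : 0 < p) : H' ≤ H := by
  by_contra! hHH
  have := P.length_le
  have := P'.length_le
  have := P'.lt_hole hW hp
  have := P'.hole_le
  by_cases hm : max H A' < A + p
  · -- `W[m + p + 1]` equals both `W[m]` and `W[m + 1]`
    set m := max H A'
    have hsq : HasPeriodOn W 1 m (m + 1) := by
      intro k hk hkm
      obtain rfl : k = m := by omega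
      rw [P'.left m (le_max_right H A') (by omega), P.right (m + 1) (by omega) (by omega),
        show m + 1 + p = m + (p + 1) by omega]
    have := hW.lt_of_hasPeriodOn hsq one_pos (by omega)
    omega
  · have := hW.lt_of_hasPeriodOn (P.left.union P'.left (by omega)) (by omega) (by omega)
    omega

theorem eq_of_close (hW : SquareFree W) (P : NearSquareRight W A p H)
    (P' : NearSquareRight W A' q H')
    (hA : 5 * A.dist A' + 10 ≤ max p q) (hH : 5 * (H + p).dist (H' + q) + 10 ≤ max p q)
    (hp : 5 * p.dist q + 10 ≤ max p q) : p = q ∧ H = H' := by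
  wlog hqp : q ≤ p generalizing A p H A' q H'
  · obtain ⟨h₁, h₂⟩ := this P' P (by rwa [Nat.dist_comm, max_comm])
      (by rwa [Nat.dist_comm, max_comm]) (by rwa [Nat.dist_comm, max_comm]) (by omega)
    exact ⟨h₁.symm, h₂.symm⟩
  unfold Nat.dist at hA hH hp
  have := P.length_le
  have := P'.length_le
  have := P.hole_le
  have := P'.hole_le
  rcases hqp.lt_or_eq with hlt | rfl
  · have := P.lt_hole hW (by omega)
    have := P'.lt_hole hW (by omega)
    have h₁ := hW.min_lt_max_add_sub P.left P'.left (by omega) (by omega)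
    have h₂ := hW.min_lt_max_add_sub P.right P'.right hlt (by omega)
    have h₃ : q + 1 < p → _ := fun hd => hW.min_lt_max_add_sub P.right P'.left hd (by omega)
    omega
  · exact ⟨rfl, le_antisymm (P'.hole_le_of_same_length hW P (by omega) (by omega))
      (P.hole_le_of_same_length hW P' (by omega) (by omega))⟩

end NearSquareRight

namespace SquareCompleting

variable {W : List α} {a ℓ b a' ℓ' b' : ℕ} {c c' : α}

theorem eq_of_close_left (hW : SquareFree W) (h : SquareCompleting W a ℓ b c)
    (h' : SquareCompleting W a' ℓ' b' c') (hs : b + 2 ≤ a + ℓ) (hs' : b' + 2 ≤ a' + ℓ')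
    (ha : 5 * a.dist a' + 11 ≤ max ℓ ℓ') (hb : 5 * b.dist b' + 11 ≤ max ℓ ℓ')
    (hℓ : 5 * ℓ.dist ℓ' + 11 ≤ max ℓ ℓ') : b = b' ∧ c = c' := by
  obtain ⟨A, rfl⟩ := Nat.exists_eq_add_one.2 h.1
  obtain ⟨p, rfl⟩ := Nat.exists_eq_add_one.2 h.2.1
  obtain ⟨A', rfl⟩ := Nat.exists_eq_add_one.2 h'.1
  obtain ⟨q, rfl⟩ := Nat.exists_eq_add_one.2 h'.2.1
  obtain ⟨P, hc⟩ := h.nearSquareLeft (by omega)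
  obtain ⟨P', hc'⟩ := h'.nearSquareLeft (by omega)
  rw [Nat.dist_add_add_right] at ha hℓ
  obtain ⟨rfl, rfl⟩ := P.eq_of_close hW P' (by omega) (by omega) (by omega)
  exact ⟨rfl, Option.some.inj (hc.symm.trans hc')⟩

theorem eq_of_close_right (hW : SquareFree W) (h : SquareCompleting W a ℓ b c)
    (h' : SquareCompleting W a' ℓ' b' c') (hs : a + ℓ < b + 2) (hs' : a' + ℓ' < b' + 2)
    (ha : 5 * a.dist a' + 11 ≤ max ℓ ℓ') (hb : 5 * b.dist b' + 11 ≤ max ℓ ℓ')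
    (hℓ : 5 * ℓ.dist ℓ' + 11 ≤ max ℓ ℓ') : b = b' ∧ c = c' := by
  obtain ⟨A, rfl⟩ := Nat.exists_eq_add_one.2 h.1
  obtain ⟨p, rfl⟩ := Nat.exists_eq_add_one.2 h.2.1
  obtain ⟨A', rfl⟩ := Nat.exists_eq_add_one.2 h'.1
  obtain ⟨q, rfl⟩ := Nat.exists_eq_add_one.2 h'.2.1
  obtain ⟨H, rfl, P, hc⟩ := h.nearSquareRight hW (by omega)
  obtain ⟨H', rfl, P', hc'⟩ := h'.nearSquareRight hW (by omega)
  rw [Nat.dist_add_add_right] at ha hb hℓ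
  obtain ⟨rfl, rfl⟩ := P.eq_of_close hW P' (by omega) (by omega) (by omega)
  exact ⟨rfl, Option.some.inj (hc.symm.trans hc')⟩

end SquareCompleting

end

theorem five_mul_dist_add_eleven_le {x y M : ℕ} (h : |(x : ℝ) - y| < M / 5 - 2) :
    5 * x.dist y + 11 ≤ M := by
  have key : ∀ {u v : ℕ}, v ≤ u → (u : ℝ) - v < M / 5 - 2 → 5 * (u - v) + 11 ≤ M := by
    intro u v huv h
    have : ((5 * (u - v) + 10 : ℕ) : ℝ) < M := by push_cast [huv]; linarith
    exact_mod_cast this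
  rcases le_total x y with hxy | hxy
  · rw [Nat.dist_eq_sub_of_le hxy]
    exact key hxy ((le_abs_self _).trans_lt (abs_sub_comm (x : ℝ) y ▸ h))
  · rw [Nat.dist_eq_sub_of_le_right hxy]
    exact key hxy ((le_abs_self _).trans_lt h)

/-- Key proposition, first part: two square-completing quadruples in a square-free word with
the same sign either have one of `a, b, ℓ` differing by at least `L/5 - 2` (where
`L = max(ℓ, ℓ')`), or they share the same gap and inserted letter. -/
theorem square_completing_far_or_same {α : Type*} (W : List α) (hW : SquareFree W)
    (a ℓ b : ℕ) (c : α) (a' ℓ' b' : ℕ) (c' : α)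
    (h : SquareCompleting W a ℓ b c) (h' : SquareCompleting W a' ℓ' b' c')
    (hsign : scSign a ℓ b = scSign a' ℓ' b') :
    ((max ℓ ℓ' : ℝ) / 5 - 2 ≤ |(a : ℝ) - (a' : ℝ)| ∨
     (max ℓ ℓ' : ℝ) / 5 - 2 ≤ |(b : ℝ) - (b' : ℝ)| ∨
     (max ℓ ℓ' : ℝ) / 5 - 2 ≤ |(ℓ : ℝ) - (ℓ' : ℝ)|) ∨
    (b = b' ∧ c = c') := by
  refine or_iff_not_imp_left.2 fun hnear => ?_
  simp only [not_or, not_le, ← Nat.cast_max] at hnear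
  obtain ⟨ha, hb, hℓ⟩ := hnear
  replace ha := five_mul_dist_add_eleven_le ha
  replace hb := five_mul_dist_add_eleven_le hb
  replace hℓ := five_mul_dist_add_eleven_le hℓ
  unfold scSign at hsign
  split_ifs at hsign with hs hs'
  · exact h.eq_of_close_left hW h' hs hs' ha hb hℓ
  · exact h.eq_of_close_right hW h' (by omega) (by omega) ha hb hℓ
end

section
/- Let W be a square-free word, and suppose (a, ℓ, b, c) and (a', ℓ, b', c') are square-completing quadruples in W with the same sign and the same length parameter ℓ. Then at least one of the following holds: (1) |a − a'| ≥ ℓ − 1; or (2) b = b' and c = c'. -/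
/-!
Because `W` is square-free, the inserted letter lies inside the square, and when it lies in
the first half (sign `1`) the square says that `W` has period `ℓ - 1` on the stretch before the
gap and period `ℓ` on the stretch after it, the letter matched with `c` being `W[b + ℓ - 1]`.
Reversing the word swaps the two signs, so it suffices to treat sign `1`. If two such
quadruples start fewer than `ℓ - 1` letters apart but use different gaps, then either some
position carries both periods `ℓ - 1` and `ℓ`, which makes two adjacent letters of `W` equal,
or the two stretches of period `ℓ` overlap into a square of `W`. Hence the gaps agree, and both
inserted letters equal the same letter of `W`.
-/

section

variable {α : Type*}

def PeriodicOn (L : List α) (p s e : ℕ) : Prop :=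
  ∀ i, s ≤ i → i < e → L[i]? = L[i + p]?

namespace PeriodicOn

variable {L : List α} {p s e : ℕ}

theorem mono (h : PeriodicOn L p s e) {s' e' : ℕ} (hs : s ≤ s') (he : e' ≤ e) :
    PeriodicOn L p s' e' :=
  fun i hi hie => h i (hs.trans hi) (hie.trans_le he)

theorem union (h₁ : PeriodicOn L p s e) {s' e' : ℕ} (h₂ : PeriodicOn L p s' e') (h : s' ≤ e) :
    PeriodicOn L p s e' := by
  intro i hi hie
  rcases lt_or_ge i e with hie' | hei
  · exact h₁ i hi hie'
  · exact h₂ i (h.trans hei) hie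

theorem reverse (h : PeriodicOn L p s e) (he : e + p ≤ L.length) :
    PeriodicOn L.reverse p (L.length - e - p) (L.length - s - p) := by
  intro i hi hie
  rw [List.getElem?_reverse (by omega), List.getElem?_reverse (by omega),
    h (L.length - 1 - (i + p)) (by omega) (by omega)]
  congr 1
  omega

end PeriodicOn

theorem List.take_drop_eq_take_drop_add_iff (L : List α) (s p : ℕ) :
    (L.drop s).take p = (L.drop (s + p)).take p ↔ PeriodicOn L p s (s + p) := by
  constructor
  · intro h i hi hie
    have hi' := congrArg (·[i - s]?) h
    simp only [List.getElem?_take, List.getElem?_drop, if_pos (by omega : i - s < p)] at hi'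
    rwa [show s + (i - s) = i by omega, show s + p + (i - s) = i + p by omega] at hi'
  · intro h
    refine List.ext_getElem? fun j => ?_
    simp only [List.getElem?_take, List.getElem?_drop]
    split_ifs with hj
    · rw [h (s + j) (by omega) (by omega)]
      congr 1
      omega
    · rfl

theorem factor_eq_factor_iff_periodicOn (L : List α) {a ℓ : ℕ} (ha : 1 ≤ a) :
    factor L a (a + ℓ) = factor L (a + ℓ) (a + 2 * ℓ) ↔ PeriodicOn L ℓ (a - 1) (a - 1 + ℓ) := by
  rw [factor, factor, show a + ℓ - a = ℓ by omega, show a + 2 * ℓ - (a + ℓ) = ℓ by omega,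
    show a + ℓ - 1 = a - 1 + ℓ by omega, List.take_drop_eq_take_drop_add_iff]

theorem List.reverse_insertIdx {W : List α} {b : ℕ} (c : α) (hb : b ≤ W.length) :
    (W.insertIdx b c).reverse = W.reverse.insertIdx (W.length - b) c := by
  have hlen := List.length_insertIdx_of_le_length hb c
  refine List.ext_getElem? fun k => ?_
  rcases lt_or_ge k (W.length + 1) with hk | hk
  · rw [List.getElem?_reverse (by omega), hlen, List.getElem?_insertIdx, List.getElem?_insertIdx]
    simp only [List.length_reverse]
    split_ifs <;> first | omega | (rw [List.getElem?_reverse (by omega)]; congr 1; omega) | simp_all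
  · rw [List.getElem?_eq_none (by simp [hlen]; omega),
      List.getElem?_eq_none (by simp [List.length_insertIdx_of_le_length]; omega)]

namespace SquareFree

variable {W : List α}

theorem not_periodicOn (hW : SquareFree W) {p s : ℕ} (hp : 0 < p) (hlen : s + 2 * p ≤ W.length) :
    ¬ PeriodicOn W p s (s + p) := by
  intro h
  refine hW ((W.drop s).take p) ?_ ?_
  · simp only [ne_eq, List.take_eq_nil_iff, List.drop_eq_nil_iff]
    omega
  · nth_rewrite 2 [(List.take_drop_eq_take_drop_add_iff W s p).2 h]
    rw [← List.drop_drop, ← List.take_add]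
    exact (List.take_prefix _ _).isInfix.trans (List.drop_suffix s W).isInfix

theorem getElem?_ne_succ (hW : SquareFree W) {i : ℕ} (hi : i + 1 < W.length) :
    W[i]? ≠ W[i + 1]? := fun h =>
  hW.not_periodicOn (s := i) one_pos (by omega) fun k hk hk' => by
    obtain rfl : k = i := by omega
    exact h

theorem reverse (hW : SquareFree W) : SquareFree W.reverse := fun X hX hXX =>
  hW X.reverse (by simpa using hX) (List.reverse_infix.1 (by simpa using hXX))

end SquareFree

theorem scSign_eq_one_iff {a ℓ b : ℕ} : scSign a ℓ b = 1 ↔ b + 2 ≤ a + ℓ := by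
  unfold scSign
  split_ifs with h <;> simp [h]

namespace SquareCompleting

variable {W : List α} {a ℓ b a' b' : ℕ} {c c' : α}

theorem periodicOn (h : SquareCompleting W a ℓ b c) :
    PeriodicOn (W.insertIdx b c) ℓ (a - 1) (a - 1 + ℓ) :=
  (factor_eq_factor_iff_periodicOn _ h.1).1 h.2.2.2.2.2

theorem add_two_le (hW : SquareFree W) (h : SquareCompleting W a ℓ b c) : b + 2 ≤ a + 2 * ℓ := by
  have hsq := h.periodicOn
  obtain ⟨ha, hℓ, -, hbn, -, -⟩ := h
  by_contra hlt
  refine hW.not_periodicOn (s := a - 1) hℓ (by omega) fun i hi hie => ?_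
  have hi' := hsq i hi hie
  rwa [List.getElem?_insertIdx_of_lt (by omega), List.getElem?_insertIdx_of_lt (by omega)] at hi'

/-- The square ends at letter `a + 2ℓ - 1` of the `(n + 1)`-letter word `W +_b c`, that is, at
letter `n + 3 - (a + 2ℓ)` counted from the right. -/
theorem reverse (hW : SquareFree W) (h : SquareCompleting W a ℓ b c) :
    SquareCompleting W.reverse (W.length + 3 - (a + 2 * ℓ)) ℓ (W.length - b) c := by
  have hin := h.add_two_le hW
  have hsq := h.periodicOn
  obtain ⟨ha, hℓ, hab, hbn, hlen, -⟩ := h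
  refine ⟨by omega, hℓ, by omega, by simp, by simp; omega, ?_⟩
  rw [factor_eq_factor_iff_periodicOn _ (by omega), ← List.reverse_insertIdx c hbn]
  have hrev := hsq.reverse (by rw [List.length_insertIdx_of_le_length hbn]; omega)
  rw [List.length_insertIdx_of_le_length hbn] at hrev
  exact hrev.mono (by omega) (by omega)

theorem getElem?_add_sub_one (h : SquareCompleting W a ℓ b c) (hb : b + 2 ≤ a + ℓ) :
    W[b + ℓ - 1]? = some c := by
  have hsq := h.periodicOn
  obtain ⟨-, hℓ, hab, hbn, -, -⟩ := h
  have hb' := hsq b (by omega) (by omega)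
  rwa [List.getElem?_insertIdx_self, if_pos hbn, List.getElem?_insertIdx_of_gt (by omega),
    eq_comm] at hb'

theorem periodicOn_before (h : SquareCompleting W a ℓ b c) (hb : b + 2 ≤ a + ℓ) :
    PeriodicOn W (ℓ - 1) (a - 1) b := by
  intro i hi hib
  have hi' := h.periodicOn i hi (by omega)
  rwa [List.getElem?_insertIdx_of_lt hib, List.getElem?_insertIdx_of_gt (by omega),
    show i + ℓ - 1 = i + (ℓ - 1) by omega] at hi'

theorem periodicOn_after (h : SquareCompleting W a ℓ b c) : PeriodicOn W ℓ b (a + ℓ - 2) := by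
  have hsq := h.periodicOn
  obtain ⟨-, -, hab, -, -, -⟩ := h
  intro i hi hie
  have hi' := hsq (i + 1) (by omega) (by omega)
  rwa [List.getElem?_insertIdx_of_gt (by omega), List.getElem?_insertIdx_of_gt (by omega),
    show i + 1 - 1 = i by omega, show i + 1 + ℓ - 1 = i + ℓ by omega] at hi'

theorem eq_of_le_of_add_two_le (hW : SquareFree W) (h : SquareCompleting W a ℓ b c)
    (h' : SquareCompleting W a' ℓ b' c') (hs : b + 2 ≤ a + ℓ) (hs' : b' + 2 ≤ a' + ℓ)
    (hle : a ≤ a') (hclose : a' + 2 ≤ a + ℓ) : b = b' ∧ c = c' := by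
  have hc := h.getElem?_add_sub_one hs
  have hc' := h'.getElem?_add_sub_one hs'
  have hbefore := h.periodicOn_before hs
  have hbefore' := h'.periodicOn_before hs'
  have hafter := h.periodicOn_after
  have hafter' := h'.periodicOn_after
  obtain ⟨ha, -, -, -, hlen, -⟩ := h
  obtain ⟨ha', -, hab', -, hlen', -⟩ := h'
  have hb : b + 3 ≤ a + ℓ := by
    by_contra! hb
    exact hW.not_periodicOn (s := a - 1) (by omega) (by omega) (hbefore.mono le_rfl (by omega))
  have hb' : b' + 3 ≤ a' + ℓ := by
    by_contra! hb'
    exact hW.not_periodicOn (s := a' - 1) (by omega) (by omega) (hbefore'.mono le_rfl (by omega))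
  -- a position with periods `ℓ - 1` and `ℓ` gives two equal adjacent letters
  have two_periods : ∀ i, i + ℓ < W.length → W[i]? = W[i + (ℓ - 1)]? → W[i]? ≠ W[i + ℓ]? :=
    fun i hi h₁ h₂ => hW.getElem?_ne_succ (i := i + (ℓ - 1)) (by omega) <| by
      rw [show i + (ℓ - 1) + 1 = i + ℓ by omega]
      exact h₁.symm.trans h₂
  have hbb : b = b' := by
    rcases lt_trichotomy b b' with hlt | heq | hgt
    · by_cases hgap : b' + 1 = a'
      · refine absurd ((hafter.union hafter' (by omega)).mono le_rfl ?_)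
          (hW.not_periodicOn (s := b) (by omega) (by omega))
        omega
      · refine absurd (hafter (max b (a' - 1)) (le_max_left ..) (by omega))
          (two_periods _ (by omega) (hbefore' _ (le_max_right ..) (by omega)))
    · exact heq
    · exact absurd (hafter' b' le_rfl (by omega))
        (two_periods b' (by omega) (hbefore b' (by omega) hgt))
  subst hbb
  exact ⟨rfl, Option.some_injective _ (hc.symm.trans hc')⟩

theorem eq_of_add_two_le (hW : SquareFree W) (h : SquareCompleting W a ℓ b c)
    (h' : SquareCompleting W a' ℓ b' c') (hs : b + 2 ≤ a + ℓ) (hs' : b' + 2 ≤ a' + ℓ)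
    (hclose : a' + 2 ≤ a + ℓ) (hclose' : a + 2 ≤ a' + ℓ) : b = b' ∧ c = c' := by
  rcases le_total a a' with hle | hle
  · exact h.eq_of_le_of_add_two_le hW h' hs hs' hle hclose
  · obtain ⟨hb, hc⟩ := h'.eq_of_le_of_add_two_le hW h hs' hs hle hclose'
    exact ⟨hb.symm, hc.symm⟩

theorem eq_of_scSign_eq (hW : SquareFree W) (h : SquareCompleting W a ℓ b c)
    (h' : SquareCompleting W a' ℓ b' c') (hsign : scSign a ℓ b = scSign a' ℓ b')
    (hclose : a' + 2 ≤ a + ℓ) (hclose' : a + 2 ≤ a' + ℓ) : b = b' ∧ c = c' := by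
  have hsign_iff : b + 2 ≤ a + ℓ ↔ b' + 2 ≤ a' + ℓ := by
    rw [← scSign_eq_one_iff, ← scSign_eq_one_iff, hsign]
  by_cases hs : b + 2 ≤ a + ℓ
  · exact h.eq_of_add_two_le hW h' hs (hsign_iff.1 hs) hclose hclose'
  · have hr := h.reverse hW
    have hr' := h'.reverse hW
    obtain ⟨-, -, -, hbn, hlen, -⟩ := h
    obtain ⟨-, -, -, hbn', hlen', -⟩ := h'
    obtain ⟨hb, hc⟩ :=
      hr.eq_of_add_two_le hW.reverse hr' (by omega) (by omega) (by omega) (by omega)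
    exact ⟨by omega, hc⟩

end SquareCompleting

end

/-- Key proposition, second part: two square-completing quadruples in a square-free word with
the same sign and the same length parameter `ℓ` either have `|a - a'| ≥ ℓ - 1`, or they
share the same gap and inserted letter. -/
theorem square_completing_same_length_far_or_same {α : Type*} (W : List α) (hW : SquareFree W)
    (a ℓ b : ℕ) (c : α) (a' b' : ℕ) (c' : α)
    (h : SquareCompleting W a ℓ b c) (h' : SquareCompleting W a' ℓ b' c')
    (hsign : scSign a ℓ b = scSign a' ℓ b') :
    ((ℓ : ℤ) - 1 ≤ |(a : ℤ) - (a' : ℤ)|) ∨ (b = b' ∧ c = c') := by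
  refine or_iff_not_imp_left.2 fun hfar => ?_
  rw [not_le, abs_lt] at hfar
  exact h.eq_of_scSign_eq hW h' hsign (by omega) (by omega)
end

section
/- Let W be a square-free word. If (a, ℓ, b, c) is a square-completing quadruple in W with sign 1 (i.e., b ≤ a + ℓ − 2), then the letter of W at position b + ℓ equals c. If (a, ℓ, b, c) is a square-completing quadruple in W with sign −1 (i.e., b ≥ a + ℓ − 1), then b ≤ a + 2ℓ − 2 and the letter of W at position b + 1 − ℓ equals c. -/
/-!
In `W +_b c` the two halves of the square agree letter by letter, so the inserted `c` is copied
by its partner `ℓ` places away. With sign `1` the `c` lies in the first half and its partner is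
the letter `b + ℓ` of `W`. With sign `-1` the square cannot lie entirely left of the inserted
letter, for then it would already be a square of `W`; so `c` lies in the second half and its
partner, `ℓ` places to the left, is the letter `b + 1 - ℓ` of `W`.
-/

theorem getElem?_factor {α : Type*} (W : List α) {a b i : ℕ} (hi : i < b - a) :
    (factor W a b)[i]? = W[a - 1 + i]? := by
  rw [factor, List.getElem?_take_of_lt hi, List.getElem?_drop]

theorem SquareFree.exists_getElem?_ne {α : Type*} {W : List α} (hW : SquareFree W)
    {s ℓ : ℕ} (hℓ : 0 < ℓ) (hlen : s + 2 * ℓ ≤ W.length) :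
    ∃ j, s ≤ j ∧ j < s + ℓ ∧ W[j]? ≠ W[j + ℓ]? := by
  by_contra! hper
  set X := (W.drop s).take ℓ
  have hX : X ≠ [] := by
    rw [← List.length_pos_iff]
    simp only [X, List.length_take, List.length_drop]
    omega
  have hXX : X ++ X = (W.drop s).take (ℓ + ℓ) := by
    rw [List.take_add]
    congr 1
    refine List.ext_getElem? fun i => ?_
    simp only [X, List.getElem?_take, List.getElem?_drop]
    split_ifs with hi
    · rw [hper (s + i) (by omega) (by omega)]
      congr 1
      omega
    · rfl
  refine hW X hX ?_
  rw [hXX]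
  exact ((W.drop s).take_prefix _).isInfix.trans (W.drop_suffix s).isInfix

theorem getElem?_add_eq_of_factor_eq {α : Type*} {L : List α} {a ℓ j : ℕ}
    (ha : 1 ≤ a) (hsq : factor L a (a + ℓ) = factor L (a + ℓ) (a + 2 * ℓ))
    (hj₁ : a ≤ j + 1) (hj₂ : j + 1 < a + ℓ) :
    L[j + ℓ]? = L[j]? := by
  have heq := congrArg (·[j + 1 - a]?) hsq
  rw [getElem?_factor _ (by omega : j + 1 - a < a + ℓ - a),
    getElem?_factor _ (by omega : j + 1 - a < a + 2 * ℓ - (a + ℓ))] at heq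
  rwa [show a - 1 + (j + 1 - a) = j by omega,
    show a + ℓ - 1 + (j + 1 - a) = j + ℓ by omega, eq_comm] at heq

/-- If `(a, ℓ, b, c)` is square-completing in the square-free word `W` with sign `1`
(i.e. `b ≤ a + ℓ - 2`), then the letter of `W` at position `b + ℓ` equals `c`; if it has
sign `-1` (i.e. `b ≥ a + ℓ - 1`), then `b ≤ a + 2ℓ - 2` and the letter of `W` at position
`b + 1 - ℓ` equals `c`.  (Letters are numbered from 1, so position `p` is index `p - 1`.) -/
theorem square_completing_forced_letter {α : Type*} (W : List α) (hW : SquareFree W)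
    (a ℓ b : ℕ) (c : α) (h : SquareCompleting W a ℓ b c) :
    (b + 2 ≤ a + ℓ → W[b + ℓ - 1]? = some c) ∧
    (a + ℓ ≤ b + 1 → b + 2 ≤ a + 2 * ℓ ∧ W[b + 1 - ℓ - 1]? = some c) := by
  obtain ⟨ha, hℓ, hab, hbW, hlen, hsq⟩ := h
  have hc : (W.insertIdx b c)[b]? = some c := by
    rw [List.getElem?_insertIdx_self, if_pos hbW]
  refine ⟨fun hsign => ?_, fun hsign => ?_⟩
  · have hpartner := getElem?_add_eq_of_factor_eq ha hsq (j := b) (by omega) (by omega)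
    rwa [List.getElem?_insertIdx_of_gt (by omega), hc] at hpartner
  · have hb : b + 2 ≤ a + 2 * ℓ := by
      by_contra! hleft
      obtain ⟨j, hj₁, hj₂, hne⟩ := hW.exists_getElem?_ne (s := a - 1) hℓ (by omega)
      have hpartner := getElem?_add_eq_of_factor_eq ha hsq (j := j) (by omega) (by omega)
      rw [List.getElem?_insertIdx_of_lt (by omega),
        List.getElem?_insertIdx_of_lt (by omega)] at hpartner
      exact hne hpartner.symm
    have hpartner := getElem?_add_eq_of_factor_eq ha hsq (j := b - ℓ) (by omega) (by omega)
    rw [Nat.sub_add_cancel (by omega), hc, List.getElem?_insertIdx_of_lt (by omega)] at hpartner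
    exact ⟨hb, by rw [show b + 1 - ℓ - 1 = b - ℓ by omega, hpartner]⟩
end

section
/- Let W be an n-letter square-free word and let 𝒜 be a set of square-completing quadruples (a, ℓ, b, c) in W such that no two elements of 𝒜 share the same pair (b, c). For an integer L ≥ 2, let 𝒜_L denote the set of quadruples in 𝒜 whose length parameter equals L. Then |𝒜_L| ≤ 2n / (L − 1). -/
def SquareFreeOn {β : Type*} (n : ℕ) (w : ℕ → β) : Prop :=
  ∀ s r : ℕ, 1 ≤ s → 1 ≤ r → s + 2 * r ≤ n + 1 → ¬ ∀ i < r, w (s + i) = w (s + r + i)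

theorem SquareFree.squareFreeOn {α : Type*} {W : List α} (hW : SquareFree W) :
    SquareFreeOn W.length (fun k => W[k - 1]?) := by
  intro s r hs hr hlen hsq
  set X := (W.drop (s - 1)).take r with hX
  have hXlen : X.length = r := by simp only [hX, List.length_take, List.length_drop]; omega
  have hXX : X = ((W.drop (s - 1)).drop r).take r := by
    refine List.ext_getElem? fun i => ?_
    by_cases hi : i < r
    · simp only [hX, List.getElem?_take, List.getElem?_drop, if_pos hi]
      convert hsq i hi using 2 <;> omega
    · simp [hX, hi]
  refine hW X (List.ne_nil_of_length_pos (by omega)) ?_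
  have hsq : X ++ X = (W.drop (s - 1)).take (r + r) := by
    rw [List.take_add, ← hXX]
  rw [hsq]
  exact (List.take_prefix _ _).isInfix.trans (List.drop_suffix _ _).isInfix

namespace SquareFreeOn

variable {β : Type*} {n m : ℕ} {w : ℕ → β}

theorem not_periodic (hw : SquareFreeOn n w) {s r : ℕ} (hs : 1 ≤ s) (hr : 1 ≤ r)
    (hn : s + 2 * r ≤ n + 1) : ¬ ∀ k, s ≤ k → k < s + r → w k = w (k + r) := fun h =>
  hw s r hs hr hn fun i hi => (h (s + i) (by omega) (by omega)).trans (congrArg w (by omega))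

theorem ne_succ (hw : SquareFreeOn n w) {k : ℕ} (hk : 1 ≤ k) (hn : k + 1 ≤ n) :
    w k ≠ w (k + 1) := fun h =>
  hw.not_periodic hk le_rfl (by omega) fun j hj₁ hj₂ => by
    obtain rfl : j = k := by omega
    exact h

theorem not_shift_and_shift_succ (hw : SquareFreeOn n w) {k : ℕ} (hk : 1 ≤ k)
    (hn : k + m + 1 ≤ n) (h : w k = w (k + m)) (h' : w k = w (k + m + 1)) : False :=
  hw.ne_succ (by omega) hn (h.symm.trans h')

theorem reflect (hw : SquareFreeOn n w) : SquareFreeOn n (fun k => w (n + 1 - k)) := by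
  intro s r hs hr hn hsq
  refine hw (n + 2 - s - 2 * r) r (by omega) hr (by omega) fun i hi => ?_
  convert (hsq (r - 1 - i) (by omega)).symm using 2 <;> omega

end SquareFreeOn

section Defects

variable {β : Type*} {n m : ℕ} {w : ℕ → β}

/-- Deleting the letter at position `p` of the window `w[a, a + 2m]` leaves a square of
half-length `m`, and `p` lies in the first half of the window. Square-completing quadruples
of sign `-1` produce these, those of sign `1` produce `PlusDefect`s. -/
structure MinusDefect (n m : ℕ) (w : ℕ → β) (a p : ℕ) : Prop where
  one_le : 1 ≤ a
  le_length : a + 2 * m ≤ n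
  lt_pos : a < p
  pos_le : p ≤ a + m
  before : ∀ k, a ≤ k → k < p → w k = w (k + m + 1)
  after : ∀ k, p < k → k ≤ a + m → w k = w (k + m)

/-- Deleting the letter at position `q` of the window `w[a, a + 2m]` leaves a square of
half-length `m`, and `q` lies in the second half of the window. -/
structure PlusDefect (n m : ℕ) (w : ℕ → β) (a q : ℕ) : Prop where
  one_le : 1 ≤ a
  le_length : a + 2 * m ≤ n
  le_pos : a + m ≤ q
  pos_lt : q < a + 2 * m
  before : ∀ k, a ≤ k → k + m < q → w k = w (k + m)
  after : ∀ k, q ≤ k + m → k < a + m → w k = w (k + m + 1)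

theorem PlusDefect.reflect {a q : ℕ} (P : PlusDefect n m w a q) :
    MinusDefect n m (fun k => w (n + 1 - k)) (n + 1 - (a + 2 * m)) (n + 1 - q) := by
  obtain ⟨ha, han, haq, hqa, hbefore, hafter⟩ := P
  refine ⟨by omega, by omega, by omega, by omega, fun k hk₁ hk₂ => ?_, fun k hk₁ hk₂ => ?_⟩
  · convert (hafter (n - k - m) (by omega) (by omega)).symm using 2 <;> omega
  · convert (hbefore (n + 1 - k - m) (by omega) (by omega)).symm using 2 <;> omega

theorem MinusDefect.add_lt_start (hw : SquareFreeOn n w) {a₁ p₁ a₂ p₂ : ℕ}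
    (D₁ : MinusDefect n m w a₁ p₁) (D₂ : MinusDefect n m w a₂ p₂) (hp : p₁ < p₂) :
    a₁ + m < a₂ := by
  by_contra! ha
  rcases D₁.pos_le.eq_or_lt with hmid | hlt
  · -- the two `before` runs join into a square of half-length `m + 1`
    refine hw.not_periodic (s := p₂ - (m + 1)) (r := m + 1) (by have := D₁.one_le; omega)
      (by omega) (by have := D₂.le_length; have := D₂.pos_le; omega) fun k hk₁ hk₂ => ?_
    rcases lt_or_ge k p₁ with hk | hk
    · exact (D₁.before k (by omega) hk).trans (congrArg w (by omega))
    · exact (D₂.before k (by omega) (by omega)).trans (congrArg w (by omega))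
  · rcases lt_or_ge p₁ a₂ with h | h
    · exact hw.not_shift_and_shift_succ (k := a₂) (by have := D₂.one_le; omega)
        (by have := D₂.le_length; have := D₂.lt_pos; have := D₂.pos_le; omega)
        (D₁.after a₂ h ha) (D₂.before a₂ le_rfl D₂.lt_pos)
    · exact hw.ne_succ (k := p₁) (by have := D₁.lt_pos; omega)
        (by have := D₁.le_length; omega)
        ((D₂.before p₁ h hp).trans ((congrArg w (by omega)).trans
          (D₁.after (p₁ + 1) (by omega) hlt).symm))

theorem PlusDefect.add_lt_start (hw : SquareFreeOn n w) {a₁ q₁ a₂ q₂ : ℕ}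
    (P₁ : PlusDefect n m w a₁ q₁) (P₂ : PlusDefect n m w a₂ q₂) (hq : q₁ < q₂) :
    a₁ + m < a₂ := by
  have := P₂.reflect.add_lt_start hw.reflect P₁.reflect
    (by have := P₂.pos_lt; have := P₂.le_length; omega)
  have := P₁.le_length
  have := P₂.le_length
  omega

theorem MinusDefect.plusDefect_dichotomy (hw : SquareFreeOn n w) {a p A q : ℕ}
    (D : MinusDefect n m w a p) (P : PlusDefect n m w A q) (h₁ : p + 2 ≤ q)
    (h₂ : q ≤ p + 2 * m) : (A + m ≤ p ∧ q ≤ a + m) ∨ (p < A ∧ a + 2 * m < q) := by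
  obtain ⟨ha, han, hap, hpa, Dbefore, Dafter⟩ := D
  obtain ⟨hA, hAn, hAq, hqA, Pbefore, Pafter⟩ := P
  by_cases hpA : p < A
  · refine Or.inr ⟨hpA, ?_⟩
    by_contra! hq
    exact hw.not_shift_and_shift_succ (k := max (p + 1) (q - m)) (by omega) (by omega)
      (Dafter _ (by omega) (by omega)) (Pafter _ (by omega) (by omega))
  have hAp : A + m ≤ p := by
    by_contra! hpAm
    rcases lt_or_ge a A with haA | hAa
    · rcases (hAq.eq_or_lt : A + m = q ∨ _) with hq | hq
      · -- the two runs of period `m + 1` join into a square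
        refine hw.not_periodic (s := A - 1) (r := m + 1) (by omega) (by omega) (by omega)
          fun k hk₁ hk₂ => ?_
        rcases lt_or_ge k p with hk | hk
        · exact (Dbefore k (by omega) hk).trans (congrArg w (by omega))
        · exact (Pafter k (by omega) (by omega)).trans (congrArg w (by omega))
      rcases (not_lt.mp hpA).lt_or_eq with hAp | rfl
      · exact hw.not_shift_and_shift_succ (k := A) (by omega) (by omega)
          (Pbefore A le_rfl (by omega)) (Dbefore A haA.le hAp)
      · refine hw.ne_succ (k := A - 1) (by omega) (by omega) ?_
        calc w (A - 1) = w (A - 1 + m + 1) := Dbefore _ (by omega) (by omega)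
          _ = w A := (congrArg w (by omega)).trans (Pbefore A le_rfl (by omega)).symm
          _ = w (A - 1 + 1) := congrArg w (by omega)
    · by_cases hq : a + m < q
      · exact hw.not_shift_and_shift_succ (k := a) ha (by omega)
          (Pbefore a hAa hq) (Dbefore a le_rfl hap)
      by_cases hgap : p + 2 ≤ A + m
      · exact hw.not_shift_and_shift_succ (k := max (p + 1) (q - m)) (by omega) (by omega)
          (Dafter _ (by omega) (by omega)) (Pafter _ (by omega) (by omega))
      · exact hw.ne_succ (k := p) (by omega) (by omega)
          ((Pafter p (by omega) hpAm).trans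
            ((congrArg w (by omega)).trans (Dafter (p + 1) (by omega) (by omega)).symm))
  refine Or.inl ⟨hAp, ?_⟩
  by_contra! hq
  exact hw.not_shift_and_shift_succ (k := max A a) (by omega) (by omega)
    (Pbefore _ (by omega) (by omega)) (Dbefore _ (by omega) (by omega))

variable {t : ℕ}

theorem MinusDefect.separated (hw : SquareFreeOn n w) {a₁ p₁ a₂ p₂ : ℕ}
    (D₁ : MinusDefect n m w a₁ p₁) (D₂ : MinusDefect n m w a₂ p₂) (h : p₁ ≠ p₂) :
    a₁ + m < a₂ ∨ a₂ + m < a₁ :=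
  (lt_or_gt_of_ne h).imp (D₁.add_lt_start hw D₂) (D₂.add_lt_start hw D₁)

theorem PlusDefect.separated (hw : SquareFreeOn n w) {a₁ q₁ a₂ q₂ : ℕ}
    (P₁ : PlusDefect n m w a₁ q₁) (P₂ : PlusDefect n m w a₂ q₂) (h : q₁ ≠ q₂) :
    a₁ + m < a₂ ∨ a₂ + m < a₁ :=
  (lt_or_gt_of_ne h).imp (P₁.add_lt_start hw P₂) (P₂.add_lt_start hw P₁)

theorem not_three_minusDefects (hw : SquareFreeOn n w) {a₁ p₁ a₂ p₂ a₃ p₃ : ℕ}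
    (D₁ : MinusDefect n m w a₁ p₁) (D₂ : MinusDefect n m w a₂ p₂)
    (D₃ : MinusDefect n m w a₃ p₃) (ht₁ : p₁ < t ∧ t ≤ p₁ + m) (ht₂ : p₂ < t ∧ t ≤ p₂ + m)
    (ht₃ : p₃ < t ∧ t ≤ p₃ + m) (h₁₂ : p₁ ≠ p₂) (h₁₃ : p₁ ≠ p₃) (h₂₃ : p₂ ≠ p₃) : False := by
  have := D₁.separated hw D₂ h₁₂
  have := D₁.separated hw D₃ h₁₃
  have := D₂.separated hw D₃ h₂₃
  have := D₁.lt_pos; have := D₂.lt_pos; have := D₃.lt_pos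
  have := D₁.pos_le; have := D₂.pos_le; have := D₃.pos_le
  omega

theorem not_three_plusDefects (hw : SquareFreeOn n w) {a₁ q₁ a₂ q₂ a₃ q₃ : ℕ}
    (P₁ : PlusDefect n m w a₁ q₁) (P₂ : PlusDefect n m w a₂ q₂)
    (P₃ : PlusDefect n m w a₃ q₃) (ht₁ : q₁ - m ≤ t ∧ t < q₁) (ht₂ : q₂ - m ≤ t ∧ t < q₂)
    (ht₃ : q₃ - m ≤ t ∧ t < q₃) (h₁₂ : q₁ ≠ q₂) (h₁₃ : q₁ ≠ q₃) (h₂₃ : q₂ ≠ q₃) : False := by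
  have := P₁.separated hw P₂ h₁₂
  have := P₁.separated hw P₃ h₁₃
  have := P₂.separated hw P₃ h₂₃
  have := P₁.le_pos; have := P₂.le_pos; have := P₃.le_pos
  have := P₁.pos_lt; have := P₂.pos_lt; have := P₃.pos_lt
  omega

theorem not_two_minusDefects_plusDefect (hw : SquareFreeOn n w) {a₁ p₁ a₂ p₂ a q : ℕ}
    (D₁ : MinusDefect n m w a₁ p₁) (D₂ : MinusDefect n m w a₂ p₂) (P : PlusDefect n m w a q)
    (ht₁ : p₁ < t ∧ t ≤ p₁ + m) (ht₂ : p₂ < t ∧ t ≤ p₂ + m) (ht : q - m ≤ t ∧ t < q)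
    (h₁₂ : p₁ ≠ p₂) : False := by
  have := D₁.separated hw D₂ h₁₂
  have := D₁.plusDefect_dichotomy hw P (by omega) (by omega)
  have := D₂.plusDefect_dichotomy hw P (by omega) (by omega)
  have := D₁.lt_pos; have := D₂.lt_pos; have := D₁.pos_le; have := D₂.pos_le
  have := P.le_pos; have := P.pos_lt
  omega

theorem not_minusDefect_two_plusDefects (hw : SquareFreeOn n w) {a p a₁ q₁ a₂ q₂ : ℕ}
    (D : MinusDefect n m w a p) (P₁ : PlusDefect n m w a₁ q₁) (P₂ : PlusDefect n m w a₂ q₂)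
    (ht : p < t ∧ t ≤ p + m) (ht₁ : q₁ - m ≤ t ∧ t < q₁) (ht₂ : q₂ - m ≤ t ∧ t < q₂)
    (h₁₂ : q₁ ≠ q₂) : False := by
  have := P₁.separated hw P₂ h₁₂
  have := D.plusDefect_dichotomy hw P₁ (by omega) (by omega)
  have := D.plusDefect_dichotomy hw P₂ (by omega) (by omega)
  have := D.lt_pos; have := D.pos_le
  have := P₁.le_pos; have := P₂.le_pos; have := P₁.pos_lt; have := P₂.pos_lt
  omega

def Defect (n m : ℕ) (w : ℕ → β) : Bool → ℕ → ℕ → Prop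
  | true => PlusDefect n m w
  | false => MinusDefect n m w

/-- The `m` positions between a deleted letter and the gap where its copy is inserted. -/
def coverSet (m : ℕ) : Bool → ℕ → Finset ℕ
  | true, q => Finset.Ico (q - m) q
  | false, p => Finset.Ioc p (p + m)

theorem Defect.not_three (hw : SquareFreeOn n w) {s₁ s₂ s₃ : Bool} {a₁ p₁ a₂ p₂ a₃ p₃ : ℕ}
    (D₁ : Defect n m w s₁ a₁ p₁) (D₂ : Defect n m w s₂ a₂ p₂) (D₃ : Defect n m w s₃ a₃ p₃)
    (ht₁ : t ∈ coverSet m s₁ p₁) (ht₂ : t ∈ coverSet m s₂ p₂) (ht₃ : t ∈ coverSet m s₃ p₃)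
    (h₁₂ : (s₁, p₁) ≠ (s₂, p₂)) (h₁₃ : (s₁, p₁) ≠ (s₃, p₃)) (h₂₃ : (s₂, p₂) ≠ (s₃, p₃)) :
    False := by
  cases s₁ <;> cases s₂ <;> cases s₃ <;>
    simp only [coverSet, Finset.mem_Ico, Finset.mem_Ioc, ne_eq, Prod.mk.injEq, true_and,
      reduceCtorEq, false_and, not_false_eq_true] at ht₁ ht₂ ht₃ h₁₂ h₁₃ h₂₃
  · exact not_three_minusDefects hw D₁ D₂ D₃ ht₁ ht₂ ht₃ h₁₂ h₁₃ h₂₃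
  · exact not_two_minusDefects_plusDefect hw D₁ D₂ D₃ ht₁ ht₂ ht₃ h₁₂
  · exact not_two_minusDefects_plusDefect hw D₁ D₃ D₂ ht₁ ht₃ ht₂ h₁₃
  · exact not_minusDefect_two_plusDefects hw D₁ D₂ D₃ ht₁ ht₂ ht₃ h₂₃
  · exact not_two_minusDefects_plusDefect hw D₂ D₃ D₁ ht₂ ht₃ ht₁ h₂₃
  · exact not_minusDefect_two_plusDefects hw D₂ D₁ D₃ ht₂ ht₁ ht₃ h₁₃
  · exact not_minusDefect_two_plusDefects hw D₃ D₁ D₂ ht₃ ht₁ ht₂ h₁₂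
  · exact not_three_plusDefects hw D₁ D₂ D₃ ht₁ ht₂ ht₃ h₁₂ h₁₃ h₂₃

theorem Defect.card_coverSet {s : Bool} {a p : ℕ} (D : Defect n m w s a p) :
    (coverSet m s p).card = m := by
  cases s
  · simp only [coverSet, Nat.card_Ioc]; omega
  · have : m ≤ p := by have := D.le_pos; omega
    simp only [coverSet, Nat.card_Ico]; omega

theorem Defect.coverSet_subset {s : Bool} {a p : ℕ} (D : Defect n m w s a p) :
    coverSet m s p ⊆ Finset.Icc 1 n := by
  intro t ht
  cases s
  · have := D.lt_pos; have := D.pos_le; have := D.le_length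
    simp only [coverSet, Finset.mem_Ioc, Finset.mem_Icc] at ht ⊢; omega
  · have := D.one_le; have := D.le_pos; have := D.pos_lt; have := D.le_length
    simp only [coverSet, Finset.mem_Ico, Finset.mem_Icc] at ht ⊢; omega

end Defects

namespace SquareCompleting

variable {α : Type*} {W : List α} {a m b : ℕ} {c : α}

theorem getElem?_insertIdx_eq {ℓ : ℕ} (h : SquareCompleting W a ℓ b c) {j : ℕ} (hj₁ : a ≤ j)
    (hj₂ : j < a + ℓ) : (W.insertIdx b c)[j - 1]? = (W.insertIdx b c)[j + ℓ - 1]? := by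
  obtain ⟨ha, -, -, -, -, heq⟩ := h
  have := congrArg (·[j - a]?) heq
  simp only [factor, List.getElem?_take, List.getElem?_drop] at this
  rw [if_pos (by omega), if_pos (by omega)] at this
  convert this using 2 <;> omega

theorem plusDefect (hw : SquareFreeOn W.length (fun k => W[k - 1]?)) (hm : 1 ≤ m)
    (h : SquareCompleting W a (m + 1) b c) (hs : b + 2 ≤ a + (m + 1)) :
    PlusDefect W.length m (fun k => W[k - 1]?) a (b + m + 1) ∧ W[b + m]? = some c := by
  have ⟨ha, _, _, hbW, hlen, _⟩ := h
  have hb : (W.insertIdx b c)[b]? = some c := by rw [List.getElem?_insertIdx_self, if_pos hbW]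
  -- `c` is not the last letter of the first half, or `W[a, a + 2m)` would be a square
  have hs' : b + 2 < a + (m + 1) := by
    by_contra
    refine hw.not_periodic (s := a) (r := m) ha hm (by omega) fun k hk₁ hk₂ => ?_
    have := h.getElem?_insertIdx_eq hk₁ (by omega)
    rwa [List.getElem?_insertIdx_of_lt (by omega), List.getElem?_insertIdx_of_gt (by omega),
      show k + (m + 1) - 1 - 1 = k + m - 1 by omega] at this
  refine ⟨⟨ha, by omega, by omega, by omega, fun k hk₁ hk₂ => ?_, fun k hk₁ hk₂ => ?_⟩, ?_⟩
  · have := h.getElem?_insertIdx_eq hk₁ (by omega)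
    rwa [List.getElem?_insertIdx_of_lt (by omega), List.getElem?_insertIdx_of_gt (by omega),
      show k + (m + 1) - 1 - 1 = k + m - 1 by omega] at this
  · have := h.getElem?_insertIdx_eq (j := k + 1) (by omega) (by omega)
    rwa [List.getElem?_insertIdx_of_gt (by omega), List.getElem?_insertIdx_of_gt (by omega),
      show k + 1 - 1 - 1 = k - 1 by omega, show k + 1 + (m + 1) - 1 - 1 = k + m + 1 - 1 by omega]
      at this
  · have := h.getElem?_insertIdx_eq (j := b + 1) (by omega) (by omega)
    rwa [Nat.add_sub_cancel, hb, List.getElem?_insertIdx_of_gt (by omega),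
      show b + 1 + (m + 1) - 1 - 1 = b + m by omega, eq_comm] at this

theorem minusDefect (hw : SquareFreeOn W.length (fun k => W[k - 1]?)) (hm : 1 ≤ m)
    (h : SquareCompleting W a (m + 1) b c) (hs : a + (m + 1) < b + 2) :
    MinusDefect W.length m (fun k => W[k - 1]?) a (b - m) ∧ W[b - m - 1]? = some c := by
  have ⟨ha, _, _, hbW, hlen, _⟩ := h
  have hb : (W.insertIdx b c)[b]? = some c := by rw [List.getElem?_insertIdx_self, if_pos hbW]
  -- `c` lies inside the square, or the square would already be a factor of `W`
  have hb₁ : b ≤ a + 2 * m := by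
    by_contra
    refine hw.not_periodic (s := a) (r := m + 1) ha (by omega) (by omega) fun k hk₁ hk₂ => ?_
    have := h.getElem?_insertIdx_eq hk₁ hk₂
    rwa [List.getElem?_insertIdx_of_lt (by omega), List.getElem?_insertIdx_of_lt (by omega)]
      at this
  -- `c` is not the first letter of the second half, or `W[a + 1, a + 2m]` would be a square
  have hb₂ : a + m < b := by
    by_contra
    refine hw.not_periodic (s := a + 1) (r := m) (by omega) hm (by omega) fun k hk₁ hk₂ => ?_
    have := h.getElem?_insertIdx_eq (j := k) (by omega) (by omega)
    rwa [List.getElem?_insertIdx_of_lt (by omega), List.getElem?_insertIdx_of_gt (by omega),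
      show k + (m + 1) - 1 - 1 = k + m - 1 by omega] at this
  refine ⟨⟨ha, by omega, by omega, by omega, fun k hk₁ hk₂ => ?_, fun k hk₁ hk₂ => ?_⟩, ?_⟩
  · have := h.getElem?_insertIdx_eq hk₁ (by omega)
    rwa [List.getElem?_insertIdx_of_lt (by omega), List.getElem?_insertIdx_of_lt (by omega),
      show k + (m + 1) - 1 = k + m + 1 - 1 by omega] at this
  · have := h.getElem?_insertIdx_eq (j := k) (by omega) (by omega)
    rwa [List.getElem?_insertIdx_of_lt (by omega), List.getElem?_insertIdx_of_gt (by omega),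
      show k + (m + 1) - 1 - 1 = k + m - 1 by omega] at this
  · have := h.getElem?_insertIdx_eq (j := b - m) (by omega) (by omega)
    rwa [List.getElem?_insertIdx_of_lt (by omega), show b - m + (m + 1) - 1 = b by omega, hb]
      at this

end SquareCompleting

namespace SquareCompleting

variable {α : Type*} {W : List α} {a m b : ℕ} {c : α}

/-- The position in `W` of the letter that the inserted letter is paired with in the square. -/
def partner (a ℓ b : ℕ) : ℕ := if b + 2 ≤ a + ℓ then b + ℓ else b + 1 - ℓ

theorem defect (hw : SquareFreeOn W.length (fun k => W[k - 1]?)) (hm : 1 ≤ m)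
    (h : SquareCompleting W a (m + 1) b c) :
    Defect W.length m (fun k => W[k - 1]?) (b + 2 ≤ a + (m + 1)) a (partner a (m + 1) b) ∧
      W[partner a (m + 1) b - 1]? = some c := by
  by_cases hs : b + 2 ≤ a + (m + 1)
  · rw [decide_eq_true hs, partner, if_pos hs, show b + (m + 1) = b + m + 1 by omega]
    exact h.plusDefect hw hm hs
  · rw [decide_eq_false hs, partner, if_neg hs, show b + 1 - (m + 1) = b - m by omega]
    exact h.minusDefect hw hm (by omega)

theorem eq_of_partner_eq {a ℓ b a' b' : ℕ} (hs : (b + 2 ≤ a + ℓ) ↔ (b' + 2 ≤ a' + ℓ))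
    (hp : partner a ℓ b = partner a' ℓ b') : b = b' := by
  unfold partner at hp
  split_ifs at hp <;> omega

end SquareCompleting

theorem card_mul_le_length_mul_two {α : Type*} {W : List α}
    (hw : SquareFreeOn W.length (fun k => W[k - 1]?)) {m : ℕ} (hm : 1 ≤ m)
    {S : Finset (ℕ × ℕ × ℕ × α)}
    (hS : ∀ q ∈ S, SquareCompleting W q.1 (m + 1) q.2.2.1 q.2.2.2)
    (hbc : ∀ q ∈ S, ∀ q' ∈ S, q.2.2.1 = q'.2.2.1 → q.2.2.2 = q'.2.2.2 → q = q') :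
    S.card * m ≤ W.length * 2 := by
  classical
  let isPlus (q : ℕ × ℕ × ℕ × α) : Bool := q.2.2.1 + 2 ≤ q.1 + (m + 1)
  let pos (q : ℕ × ℕ × ℕ × α) : ℕ := SquareCompleting.partner q.1 (m + 1) q.2.2.1
  have hD (q) (hq : q ∈ S) := (hS q hq).defect hw hm
  have hinj : ∀ q ∈ S, ∀ q' ∈ S, (isPlus q, pos q) = (isPlus q', pos q') → q = q' := by
    intro q hq q' hq' heq
    simp only [Prod.mk.injEq, isPlus, pos] at heq
    refine hbc q hq q' hq' (SquareCompleting.eq_of_partner_eq ?_ heq.2) ?_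
    · simpa using heq.1
    · exact Option.some.inj ((hD q hq).2.symm.trans (heq.2 ▸ (hD q' hq').2))
  rw [show W.length = (Finset.Icc 1 W.length).card by simp]
  refine Finset.card_mul_le_card_mul (fun q t => t ∈ coverSet m (isPlus q) (pos q))
    (fun q hq => ?_) (fun t _ => ?_)
  · rw [Finset.bipartiteAbove, Finset.filter_mem_eq_inter,
      Finset.inter_eq_right.2 (hD q hq).1.coverSet_subset, (hD q hq).1.card_coverSet]
  · by_contra! h
    obtain ⟨x, hx, y, hy, z, hz, hxy, hxz, hyz⟩ := Finset.two_lt_card.mp h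
    simp only [Finset.bipartiteBelow, Finset.mem_filter] at hx hy hz
    exact (hD x hx.1).1.not_three hw (hD y hy.1).1 (hD z hz.1).1 hx.2 hy.2 hz.2
      (mt (hinj x hx.1 y hy.1) hxy) (mt (hinj x hx.1 z hz.1) hxz) (mt (hinj y hy.1 z hz.1) hyz)

/-- Counting bound: in an `n`-letter square-free word, a family of square-completing
quadruples, no two of which share the same pair `(b, c)`, contains at most `2n / (L - 1)`
quadruples with length parameter equal to `L`, for each `L ≥ 2`. -/
theorem count_square_completing_fixed_length {α : Type*} (W : List α) (n : ℕ)
    (hn : W.length = n) (hW : SquareFree W)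
    (A : Finset (ℕ × ℕ × ℕ × α))
    (hA : ∀ q ∈ A, SquareCompleting W q.1 q.2.1 q.2.2.1 q.2.2.2)
    (hbc : ∀ q ∈ A, ∀ q' ∈ A, q.2.2.1 = q'.2.2.1 → q.2.2.2 = q'.2.2.2 → q = q')
    (L : ℕ) (hL : 2 ≤ L) :
    (((A.filter (fun q => q.2.1 = L)).card : ℝ)) ≤ 2 * n / ((L : ℝ) - 1) := by
  obtain ⟨m, rfl⟩ : ∃ m, L = m + 1 := ⟨L - 1, by omega⟩
  have hcount := card_mul_le_length_mul_two hW.squareFreeOn (m := m) (by omega)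
    (S := A.filter (fun q => q.2.1 = m + 1))
    (fun q hq => (Finset.mem_filter.1 hq).2 ▸ hA q (Finset.mem_filter.1 hq).1)
    (fun q hq q' hq' => hbc q (Finset.mem_filter.1 hq).1 q' (Finset.mem_filter.1 hq').1)
  rw [Nat.cast_add_one, add_sub_cancel_right, le_div_iff₀ (by norm_cast; omega), ← hn]
  exact_mod_cast (by omega : _ * m ≤ 2 * W.length)
end

section
/- Let W be an extremal square-free word of length n over an alphabet Σ. Then for every gap b with 0 ≤ b ≤ n and every letter c ∈ Σ that is distinct from each letter of W adjacent to gap b (i.e., c is not the letter at position b when b ≥ 1 and not the letter at position b+1 when b ≤ n−1), there exist a positive integer a with a ≤ b + 1 and an integer ℓ ≥ 2 such that (a, ℓ, b, c) is a square-completing quadruple in W. Consequently, if |Σ| = k, there is a set of square-completing quadruples in W, no two sharing the same pair (b, c) and all with ℓ ≥ 2, of size at least (k − 2)(n + 1). -/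
/-!
Inserting a letter `c` at gap `b` of an extremal square-free word `W` creates a square `XX`.
Since `W` itself is square-free, the occurrence of `XX` must contain the inserted letter,
which gives a square-completing quadruple with `ℓ = |X|`. If `|X| = 1` then `XX = cc`, so `c`
equals a letter of `W` adjacent to gap `b`. Every gap has at most two adjacent letters, so each of
the `n + 1` gaps admits at least `k - 2` letters `c`, each with its own quadruple.
-/

namespace List

variable {α : Type*}

theorem insertIdx_eq_take_append_cons {W : List α} {b : ℕ} (hb : b ≤ W.length) (c : α) :
    W.insertIdx b c = W.take b ++ c :: W.drop b := by
  induction b generalizing W with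
  | zero => simp
  | succ b ih =>
    cases W with
    | nil => simp at hb
    | cons x xs =>
      simp only [insertIdx_succ_cons, take_succ_cons, drop_succ_cons, cons_append]
      rw [ih (by simpa using hb)]

theorem infix_left_of_append_eq_append {s Y t p q : List α} (h : s ++ Y ++ t = p ++ q)
    (hle : s.length + Y.length ≤ p.length) : Y <:+: p :=
  have hsY : s ++ Y <+: p ++ q := ⟨t, h⟩
  (suffix_append s Y).isInfix.trans
    (prefix_of_prefix_length_le hsY (prefix_append p q) (by simpa using hle)).isInfix

theorem infix_right_of_append_eq_append {s Y t p q : List α} (h : s ++ Y ++ t = p ++ q)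
    (hle : p.length ≤ s.length) : Y <:+: q := by
  have hYt : Y ++ t <:+ p ++ q := ⟨s, by simpa using h⟩
  have hlen := congrArg length h
  simp only [length_append] at hlen
  exact (prefix_append Y t).isInfix.trans
    (suffix_of_suffix_length_le hYt (suffix_append p q) (by simp; omega)).isInfix

end List

open List

section

variable {α : Type*}

theorem factor_eq_of_append_eq {W s Y t : List α} (h : s ++ Y ++ t = W) {a : ℕ}
    (ha : a = s.length + 1) : factor W a (a + Y.length) = Y := by
  subst h ha
  simp [factor, List.append_assoc]

theorem isExtension_insertIdx {W : List α} {b : ℕ} (hb : b ≤ W.length) (c : α) :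
    IsExtension W (W.insertIdx b c) :=
  ⟨W.take b, W.drop b, c, (take_append_drop b W).symm,
    by rw [insertIdx_eq_take_append_cons hb]; simp⟩

theorem SquareFree.square_covers_inserted_letter {W s X t : List α} {b : ℕ} {c : α}
    (hW : SquareFree W) (hb : b ≤ W.length) (hX : X ≠ [])
    (h : s ++ (X ++ X) ++ t = W.insertIdx b c) :
    s.length ≤ b ∧ b < s.length + 2 * X.length := by
  rw [insertIdx_eq_take_append_cons hb] at h
  have hXX : (X ++ X).length = 2 * X.length := by simp; omega
  constructor
  · by_contra! hbs
    refine hW X hX ((infix_right_of_append_eq_append (p := W.take b ++ [c]) (by simpa using h)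
      ?_).trans (drop_suffix b W).isInfix)
    simp; omega
  · by_contra! hbs
    refine hW X hX ((infix_left_of_append_eq_append h ?_).trans (take_prefix b W).isInfix)
    simp; omega

theorem two_le_length_of_square_covers_inserted_letter {W s X t : List α} {b : ℕ} {c : α}
    (hb : b ≤ W.length) (h₁ : 1 ≤ b → W[b - 1]? ≠ some c)
    (h₂ : b + 1 ≤ W.length → W[b]? ≠ some c) (hX : X ≠ [])
    (h : s ++ (X ++ X) ++ t = W.insertIdx b c)
    (hsb : s.length ≤ b) (hbs : b < s.length + 2 * X.length) : 2 ≤ X.length := by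
  rw [insertIdx_eq_take_append_cons hb] at h
  by_contra! hX2
  obtain ⟨x, rfl⟩ := length_eq_one_iff.1 (show X.length = 1 by
    have := length_pos_iff.2 hX; omega)
  have htake : (W.take b).length = b := length_take_of_le hb
  rcases (show b = s.length ∨ b = s.length + 1 by simp at hbs; omega) with rfl | rfl
  · obtain ⟨-, hdrop⟩ := append_inj (by simpa using h) htake.symm
    simp only [cons.injEq] at hdrop
    obtain ⟨rfl, hdrop⟩ := hdrop
    have hlen := congrArg length hdrop
    have hWb := congrArg (·[0]?) hdrop
    simp only [length_cons, length_drop, getElem?_cons_zero, getElem?_drop] at hlen hWb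
    exact h₂ (by omega) (by simpa using hWb.symm)
  · obtain ⟨htk, hdrop⟩ :=
      append_inj (s₁ := s ++ [x]) (by simpa using h) (by simpa using htake.symm)
    simp only [cons.injEq] at hdrop
    obtain ⟨rfl, -⟩ := hdrop
    have hWb := congrArg (·[s.length]?) htk
    simp only [getElem?_append_right le_rfl, Nat.sub_self, getElem?_cons_zero,
      getElem?_take_of_lt (Nat.lt_succ_self _)] at hWb
    exact h₁ (by omega) (by simpa using hWb.symm)

theorem squareCompleting_of_append_eq_insertIdx {W s X t : List α} {b : ℕ} {c : α}
    (hb : b ≤ W.length) (hX : X ≠ []) (h : s ++ (X ++ X) ++ t = W.insertIdx b c)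
    (hsb : s.length ≤ b) : SquareCompleting W (s.length + 1) X.length b c := by
  have hlen := congrArg length h
  simp only [length_append, length_insertIdx_of_le_length hb] at hlen
  have hX1 := length_pos_iff.2 hX
  refine ⟨by omega, hX1, by omega, hb, by omega, ?_⟩
  rw [factor_eq_of_append_eq (by simpa using h) rfl, two_mul, ← add_assoc,
    factor_eq_of_append_eq (s := s ++ X) (by simpa using h) (by simp; omega)]

theorem ExtremalSquareFree.exists_squareCompleting {W : List α} (hW : ExtremalSquareFree W)
    {b : ℕ} (hb : b ≤ W.length) {c : α} (h₁ : 1 ≤ b → W[b - 1]? ≠ some c)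
    (h₂ : b + 1 ≤ W.length → W[b]? ≠ some c) :
    ∃ a ℓ : ℕ, 1 ≤ a ∧ a ≤ b + 1 ∧ 2 ≤ ℓ ∧ SquareCompleting W a ℓ b c := by
  obtain ⟨X, hX, s, t, h⟩ : ∃ X, X ≠ [] ∧ X ++ X <:+: W.insertIdx b c := by
    simpa [SquareFree] using hW.2 _ (isExtension_insertIdx hb c)
  obtain ⟨hsb, hbs⟩ := hW.1.square_covers_inserted_letter hb hX h
  exact ⟨s.length + 1, X.length, by omega, by omega,
    two_le_length_of_square_covers_inserted_letter hb h₁ h₂ hX h hsb hbs,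
    squareCompleting_of_append_eq_insertIdx hb hX h hsb⟩

end

theorem Finset.card_sub_two_le_card_filter {β : Type*} [Fintype β] (p : β → Prop)
    [DecidablePred p] (o₁ o₂ : Option β)
    (h : ∀ c, ¬ p c → o₁ = some c ∨ o₂ = some c) :
    Fintype.card β - 2 ≤ (univ.filter p).card := by
  classical
  have hbad : (univ.filter fun c => ¬ p c).card ≤ 2 := calc
    _ ≤ (o₁.toFinset ∪ o₂.toFinset).card :=
      card_le_card fun c hc => by simpa using h c (mem_filter.1 hc).2
    _ ≤ o₁.toFinset.card + o₂.toFinset.card := card_union_le _ _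
    _ ≤ 1 + 1 := add_le_add (by cases o₁ <;> simp) (by cases o₂ <;> simp)
  have := card_filter_add_card_filter_not (s := univ) p
  rw [card_univ] at this
  omega

def admissibleLetters {α : Type*} [Fintype α] [DecidableEq α] (W : List α) (b : ℕ) :
    Finset α :=
  Finset.univ.filter fun c =>
    (1 ≤ b → W[b - 1]? ≠ some c) ∧ (b + 1 ≤ W.length → W[b]? ≠ some c)

theorem card_sub_two_mul_le_card_sigma_admissibleLetters {α : Type*} [Fintype α]
    [DecidableEq α] (W : List α) :
    (Fintype.card α - 2) * (W.length + 1) ≤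
      ((Finset.range (W.length + 1)).sigma (admissibleLetters W)).card := by
  rw [Finset.card_sigma]
  calc (Fintype.card α - 2) * (W.length + 1)
      = (Finset.range (W.length + 1)).card • (Fintype.card α - 2) := by simp [mul_comm]
    _ ≤ ∑ b ∈ Finset.range (W.length + 1), (admissibleLetters W b).card :=
      Finset.card_nsmul_le_sum _ _ _ fun b _ =>
        Finset.card_sub_two_le_card_filter _ W[b - 1]? W[b]? fun c hc => by tauto

/-- In an extremal square-free word `W` of length `n`, for every gap `b` (`0 ≤ b ≤ n`) and
every letter `c` distinct from the letters of `W` adjacent to gap `b`, there is a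
square-completing quadruple `(a, ℓ, b, c)` with `ℓ ≥ 2`.  Consequently, if the alphabet has
`k` letters, there is a family of square-completing quadruples with `ℓ ≥ 2`, no two sharing
the same pair `(b, c)`, of size at least `(k - 2)(n + 1)`. -/
theorem extremal_many_square_completing {α : Type*} [Fintype α] (W : List α) (n : ℕ)
    (hn : W.length = n) (hW : ExtremalSquareFree W) :
    (∀ b ≤ n, ∀ c : α,
      (1 ≤ b → W[b - 1]? ≠ some c) → (b + 1 ≤ n → W[b]? ≠ some c) →
      ∃ a ℓ : ℕ, 1 ≤ a ∧ a ≤ b + 1 ∧ 2 ≤ ℓ ∧ SquareCompleting W a ℓ b c) ∧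
    ∃ A : Finset (ℕ × ℕ × ℕ × α),
      (∀ q ∈ A, SquareCompleting W q.1 q.2.1 q.2.2.1 q.2.2.2 ∧ 2 ≤ q.2.1) ∧
      (∀ q ∈ A, ∀ q' ∈ A, q.2.2.1 = q'.2.2.1 → q.2.2.2 = q'.2.2.2 → q = q') ∧
      (Fintype.card α - 2) * (n + 1) ≤ A.card := by
  classical
  subst hn
  refine ⟨fun b hb c h₁ h₂ => hW.exists_squareCompleting hb h₁ h₂, ?_⟩
  set P := (Finset.range (W.length + 1)).sigma (admissibleLetters W)
  have hsc : ∀ p ∈ P, ∃ a ℓ, 2 ≤ ℓ ∧ SquareCompleting W a ℓ p.1 p.2 := by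
    rintro ⟨b, c⟩ hp
    simp only [P, admissibleLetters, Finset.mem_sigma, Finset.mem_range, Nat.lt_succ_iff,
      Finset.mem_filter, Finset.mem_univ, true_and] at hp
    obtain ⟨a, ℓ, -, -, hℓ, hq⟩ := hW.exists_squareCompleting hp.1 hp.2.1 hp.2.2
    exact ⟨a, ℓ, hℓ, hq⟩
  choose! a ℓ hℓ hsc using hsc
  let quadruple (p : Σ _ : ℕ, α) : ℕ × ℕ × ℕ × α := (a p, ℓ p, p.1, p.2)
  have hext (p q : Σ _ : ℕ, α) (h₁ : p.1 = q.1) (h₂ : p.2 = q.2) : p = q :=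
    Sigma.ext h₁ (heq_of_eq h₂)
  have hinj : Function.Injective quadruple := fun p q h =>
    hext p q (congrArg (·.2.2.1) h) (congrArg (·.2.2.2) h)
  refine ⟨P.image quadruple, ?_, ?_, ?_⟩
  · simp only [Finset.mem_image]
    rintro _ ⟨p, hp, rfl⟩
    exact ⟨hsc p hp, hℓ p hp⟩
  · simp only [Finset.mem_image]
    rintro _ ⟨p, -, rfl⟩ _ ⟨q, -, rfl⟩ hb hc
    exact congrArg quadruple (hext p q hb hc)
  · rw [Finset.card_image_of_injective _ hinj]
    exact card_sub_two_mul_le_card_sigma_admissibleLetters W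
end
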